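/- arXiv:2402.12623 — 4 statements merged into one kernel-verified Lean document; each statement's English description precedes it below -/
import Mathlib

section
/- Let F be a finite nonempty type, let P be an F-by-F real matrix with nonnegative entries such that every row of P sums to 1, let α be a real number with 0 < α < 1, let w : F → ℝ satisfy w(i) > 0 for all i and the detailed-balance condition w(i)·P[i,j] = w(j)·P[j,i] for all i, j, and let s : F → ℝ satisfy s(i) > 0 for all i. Let R = ∑_{ℓ=0}^{∞} (1−α)·α^ℓ · P^ℓ and define C(e) = ∑_{i ∈ F} (w(i)/s(i))·R[i,e] for each e ∈ F. Then for every e ∈ F: C(e) = w(e) · ∑_{i ∈ F} R[e,i]/s(i). -/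
open Matrix Finset

/-- Under detailed balance, the EdgeRAKE centrality
`C e = ∑ i, (w i / s i) * R[i,e]` equals `w e * ∑ i, R[e,i] / s i`. -/
theorem stmt_7 {F : Type*} [Fintype F] [Nonempty F] [DecidableEq F]
    (P : Matrix F F ℝ)
    (hP : ∀ i j, 0 ≤ P i j)
    (hrow : ∀ i, ∑ j, P i j = 1)
    (α : ℝ) (hα : 0 < α) (hα1 : α < 1)
    (w : F → ℝ) (hw : ∀ i, 0 < w i)
    (hdb : ∀ i j, w i * P i j = w j * P j i)
    (s : F → ℝ) (hs : ∀ i, 0 < s i)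
    (R : Matrix F F ℝ) (hR : R = ∑' ℓ : ℕ, ((1 - α) * α ^ ℓ) • P ^ ℓ)
    (C : F → ℝ) (hC : ∀ e, C e = ∑ i, (w i / s i) * R i e) :
    ∀ e, C e = w e * ∑ i, R e i / s i := by
  -- nonnegativity and row sums of powers
  have hpow_nn : ∀ ℓ : ℕ, ∀ i j, 0 ≤ (P ^ ℓ) i j := by
    intro ℓ
    induction ℓ with
    | zero => intro i j; simp [Matrix.one_apply]; positivity
    | succ n ih =>
      intro i j
      rw [pow_succ, Matrix.mul_apply]
      exact Finset.sum_nonneg fun k _ => mul_nonneg (ih i k) (hP k j)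
  have hpow_row : ∀ ℓ : ℕ, ∀ i, ∑ j, (P ^ ℓ) i j = 1 := by
    intro ℓ
    induction ℓ with
    | zero => intro i; simp [Matrix.one_apply]
    | succ n ih =>
      intro i
      simp only [pow_succ, Matrix.mul_apply]
      rw [Finset.sum_comm]
      simp_rw [← Finset.mul_sum, hrow, mul_one]
      exact ih i
  have hpow_le : ∀ ℓ : ℕ, ∀ i j, (P ^ ℓ) i j ≤ 1 := by
    intro ℓ i j
    calc (P ^ ℓ) i j ≤ ∑ k, (P ^ ℓ) i k :=
          Finset.single_le_sum (fun k _ => hpow_nn ℓ i k) (Finset.mem_univ j)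
      _ = 1 := hpow_row ℓ i
  -- summability of the entrywise series
  have hc_nn : ∀ ℓ : ℕ, (0:ℝ) ≤ (1 - α) * α ^ ℓ := fun ℓ =>
    mul_nonneg (by linarith) (pow_nonneg hα.le ℓ)
  have hsum_entry : ∀ i j, Summable (fun ℓ : ℕ => ((1 - α) * α ^ ℓ) * (P ^ ℓ) i j) := by
    intro i j
    apply Summable.of_nonneg_of_le
      (fun ℓ => mul_nonneg (hc_nn ℓ) (hpow_nn ℓ i j))
      (fun ℓ => ?_)
      ((summable_geometric_of_lt_one hα.le hα1).mul_left (1 - α))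
    calc ((1 - α) * α ^ ℓ) * (P ^ ℓ) i j ≤ ((1 - α) * α ^ ℓ) * 1 :=
          mul_le_mul_of_nonneg_left (hpow_le ℓ i j) (hc_nn ℓ)
      _ = (1 - α) * α ^ ℓ := by ring
  have hsum_mat : Summable (fun ℓ : ℕ => ((1 - α) * α ^ ℓ) • P ^ ℓ) := by
    rw [show (fun ℓ : ℕ => ((1 - α) * α ^ ℓ) • P ^ ℓ) =
        (fun ℓ : ℕ => (fun i j => ((1 - α) * α ^ ℓ) * (P ^ ℓ) i j : Matrix F F ℝ)) from rfl]
    exact Pi.summable.2 fun i => Pi.summable.2 fun j => hsum_entry i j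
  -- entrywise formula for R
  have hRentry : ∀ i j, R i j = ∑' ℓ : ℕ, ((1 - α) * α ^ ℓ) * (P ^ ℓ) i j := by
    intro i j
    rw [hR]
    have h1 : (∑' ℓ : ℕ, ((1 - α) * α ^ ℓ) • P ^ ℓ) i =
        ∑' ℓ : ℕ, (((1 - α) * α ^ ℓ) • P ^ ℓ) i := tsum_apply hsum_mat
    have h2 : (∑' ℓ : ℕ, (((1 - α) * α ^ ℓ) • P ^ ℓ) i) j =
        ∑' ℓ : ℕ, (((1 - α) * α ^ ℓ) • P ^ ℓ) i j :=
      tsum_apply (Pi.summable.1 hsum_mat i)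
    show (∑' ℓ : ℕ, ((1 - α) * α ^ ℓ) • P ^ ℓ) i j = _
    rw [congrFun h1 j |>.trans h2]
    rfl
  -- detailed balance for powers
  have hdb_pow : ∀ ℓ : ℕ, ∀ i j, w i * (P ^ ℓ) i j = w j * (P ^ ℓ) j i := by
    intro ℓ
    induction ℓ with
    | zero =>
      intro i j
      by_cases h : i = j
      · subst h; rfl
      · simp [Matrix.one_apply, h, Ne.symm h]
    | succ n ih =>
      intro i j
      have L : (P ^ (n+1)) i j = ∑ k, (P ^ n) i k * P k j := by
        rw [pow_succ, Matrix.mul_apply]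
      have R' : (P ^ (n+1)) j i = ∑ k, P j k * (P ^ n) k i := by
        rw [pow_succ', Matrix.mul_apply]
      rw [L, R', Finset.mul_sum, Finset.mul_sum]
      apply Finset.sum_congr rfl
      intro k _
      linear_combination P k j * ih i k + (P ^ n) k i * hdb k j
  -- detailed balance for R
  have hdbR : ∀ i j, w i * R i j = w j * R j i := by
    intro i j
    rw [hRentry i j, hRentry j i, ← tsum_mul_left, ← tsum_mul_left]
    apply tsum_congr
    intro ℓ
    linear_combination ((1 - α) * α ^ ℓ) * hdb_pow ℓ i j
  intro e
  rw [hC e, Finset.mul_sum]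
  apply Finset.sum_congr rfl
  intro i _
  have hsi := (hs i).ne'
  field_simp
  nlinarith [hdbR i e]
end

section
/- Let F be a finite nonempty type, let P be an F-by-F real matrix with nonnegative entries such that every row of P sums to 1, let α be a real number with 0 < α < 1, let w : F → ℝ satisfy w(i) > 0 for all i and the detailed-balance condition w(i)·P[i,j] = w(j)·P[j,i] for all i, j, and let s : F → ℝ satisfy s(i) > 0 for all i. Let R = ∑_{ℓ=0}^{∞} (1−α)·α^ℓ · P^ℓ and define C(e) = ∑_{i ∈ F} (w(i)/s(i))·R[i,e]. Then for every e ∈ F: w(e) / (max_{i ∈ F} s(i)) ≤ C(e) ≤ w(e) / (min_{i ∈ F} s(i)). -/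
open Matrix Finset

/-!
`R` is a convex combination of the powers of `P`, so it is again row-stochastic, and it inherits
detailed balance, `w i * R i e = w e * R e i`. Hence `C e = w e * ∑ i, R e i / s i` is `w e` times
an `R e`-weighted average of the numbers `1 / s i`, which lies between `1 / max s` and `1 / min s`.
-/

namespace Matrix

variable {n : Type*} [Fintype n] [DecidableEq n]

section RowStochastic

variable {R : Type*} [Semiring R] [PartialOrder R] [IsOrderedRing R] {M : Matrix n n R}
  {x : n → R} {b : R}

lemma mulVec_apply_le_of_mem_rowStochastic (hM : M ∈ rowStochastic R n) (hx : ∀ i, x i ≤ b)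
    (j : n) : (M *ᵥ x) j ≤ b :=
  calc (M *ᵥ x) j = ∑ i, M j i * x i := rfl
    _ ≤ ∑ i, M j i * b := sum_le_sum fun i _ => mul_le_mul_of_nonneg_left (hx i) (hM.1 j i)
    _ = b := by rw [← sum_mul, sum_row_of_mem_rowStochastic hM, one_mul]

lemma le_mulVec_apply_of_mem_rowStochastic (hM : M ∈ rowStochastic R n) (hx : ∀ i, b ≤ x i)
    (j : n) : b ≤ (M *ᵥ x) j :=
  calc b = ∑ i, M j i * b := by rw [← sum_mul, sum_row_of_mem_rowStochastic hM, one_mul]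
    _ ≤ ∑ i, M j i * x i := sum_le_sum fun i _ => mul_le_mul_of_nonneg_left (hx i) (hM.1 j i)
    _ = (M *ᵥ x) j := rfl

end RowStochastic

section Series

variable {ι : Type*} {M : ι → Matrix n n ℝ} {c : ι → ℝ}

lemma summable_smul_of_mem_rowStochastic (hM : ∀ ℓ, M ℓ ∈ rowStochastic ℝ n)
    (hc0 : ∀ ℓ, 0 ≤ c ℓ) (hc : Summable c) : Summable fun ℓ => c ℓ • M ℓ :=
  Pi.summable.2 fun i => Pi.summable.2 fun j =>
    hc.of_nonneg_of_le (fun ℓ => mul_nonneg (hc0 ℓ) ((hM ℓ).1 i j))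
      fun ℓ => mul_le_of_le_one_right (hc0 ℓ) (le_one_of_mem_rowStochastic (hM ℓ))

lemma tsum_smul_mem_rowStochastic (hM : ∀ ℓ, M ℓ ∈ rowStochastic ℝ n)
    (hc0 : ∀ ℓ, 0 ≤ c ℓ) (hc : HasSum c 1) : ∑' ℓ, c ℓ • M ℓ ∈ rowStochastic ℝ n := by
  have hsum := summable_smul_of_mem_rowStochastic hM hc0 hc.summable
  have hentry (i j : n) : HasSum (fun ℓ => c ℓ * M ℓ i j) ((∑' ℓ, c ℓ • M ℓ) i j) :=
    Pi.hasSum.1 (Pi.hasSum.1 hsum.hasSum i) j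
  refine mem_rowStochastic_iff_sum.2 ⟨fun i j => ?_, fun i => ?_⟩
  · exact (hentry i j).nonneg fun ℓ => mul_nonneg (hc0 ℓ) ((hM ℓ).1 i j)
  · have hrow := hasSum_sum (s := univ) fun j _ => hentry i j
    simp_rw [← mul_sum, sum_row_of_mem_rowStochastic (hM _), mul_one] at hrow
    exact hrow.unique hc

end Series

section DetailedBalance

variable {R : Type*} [CommSemiring R] {w : n → R} {P : Matrix n n R}

lemma semiconjBy_diagonal_transpose_iff :
    SemiconjBy (diagonal w) P Pᵀ ↔ ∀ i j, w i * P i j = w j * P j i := by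
  rw [SemiconjBy, ← Matrix.ext_iff]
  refine forall₂_congr fun i j => ?_
  rw [diagonal_mul, mul_diagonal, transpose_apply, mul_comm (P j i)]

lemma SemiconjBy.vecMul_diagonal_transpose (h : SemiconjBy (diagonal w) P Pᵀ) (f : n → R) :
    (f ᵥ* diagonal w) ᵥ* P = (P *ᵥ f) ᵥ* diagonal w := by
  rw [vecMul_vecMul, h.eq, ← vecMul_vecMul, vecMul_transpose]

lemma SemiconjBy.tsum_smul_pow_transpose [TopologicalSpace R] [IsTopologicalSemiring R]
    [T2Space R] (h : SemiconjBy (diagonal w) P Pᵀ) {c : ℕ → R}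
    (hs : Summable fun ℓ => c ℓ • P ^ ℓ) :
    SemiconjBy (diagonal w) (∑' ℓ, c ℓ • P ^ ℓ) (∑' ℓ, c ℓ • P ^ ℓ)ᵀ := by
  rw [transpose_tsum]
  refine SemiconjBy.tsum_right _ hs hs.matrix_transpose fun ℓ => ?_
  rw [transpose_smul, transpose_pow]
  exact (h.pow_right ℓ).smul_right (c ℓ)

end DetailedBalance

end Matrix

lemma hasSum_one_sub_mul_geometric {α : ℝ} (h0 : 0 ≤ α) (h1 : α < 1) :
    HasSum (fun ℓ : ℕ => (1 - α) * α ^ ℓ) 1 := by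
  simpa [mul_inv_cancel₀ (sub_ne_zero.2 h1.ne')] using
    (hasSum_geometric_of_lt_one h0 h1).mul_left (1 - α)

/-- Under detailed balance, the EdgeRAKE centrality `C e` satisfies
`w e / max_i s i ≤ C e ≤ w e / min_i s i`. -/
theorem stmt_8 {F : Type*} [Fintype F] [Nonempty F] [DecidableEq F]
    (P : Matrix F F ℝ)
    (hP : ∀ i j, 0 ≤ P i j)
    (hrow : ∀ i, ∑ j, P i j = 1)
    (α : ℝ) (hα : 0 < α) (hα1 : α < 1)
    (w : F → ℝ) (hw : ∀ i, 0 < w i)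
    (hdb : ∀ i j, w i * P i j = w j * P j i)
    (s : F → ℝ) (hs : ∀ i, 0 < s i)
    (R : Matrix F F ℝ) (hR : R = ∑' ℓ : ℕ, ((1 - α) * α ^ ℓ) • P ^ ℓ)
    (C : F → ℝ) (hC : ∀ e, C e = ∑ i, (w i / s i) * R i e) :
    ∀ e, w e / (Finset.univ.sup' Finset.univ_nonempty s) ≤ C e ∧
         C e ≤ w e / (Finset.univ.inf' Finset.univ_nonempty s) := by
  intro e
  have hPpow (ℓ : ℕ) : P ^ ℓ ∈ rowStochastic ℝ F :=
    pow_mem (mem_rowStochastic_iff_sum.2 ⟨hP, hrow⟩) ℓ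
  have hc0 (ℓ : ℕ) : 0 ≤ (1 - α) * α ^ ℓ := mul_nonneg (sub_nonneg.2 hα1.le) (pow_nonneg hα.le ℓ)
  have hc := hasSum_one_sub_mul_geometric hα.le hα1
  have hRst : R ∈ rowStochastic ℝ F := hR ▸ tsum_smul_mem_rowStochastic hPpow hc0 hc
  have hRdb : SemiconjBy (diagonal w) R Rᵀ := hR ▸
    (semiconjBy_diagonal_transpose_iff.2 hdb).tsum_smul_pow_transpose
      (summable_smul_of_mem_rowStochastic hPpow hc0 hc.summable)
  have hCe : C e = (R *ᵥ fun i => (s i)⁻¹) e * w e := by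
    rw [hC, ← vecMul_diagonal, ← hRdb.vecMul_diagonal_transpose]
    refine sum_congr rfl fun i _ => ?_
    rw [vecMul_diagonal, div_eq_inv_mul]
  have hmin : 0 < univ.inf' univ_nonempty s := (lt_inf'_iff _).2 fun i _ => hs i
  rw [hCe, div_eq_inv_mul, div_eq_inv_mul]
  exact ⟨mul_le_mul_of_nonneg_right (le_mulVec_apply_of_mem_rowStochastic hRst
      (fun i => inv_anti₀ (hs i) (le_sup' s (mem_univ i))) e) (hw e).le,
    mul_le_mul_of_nonneg_right (mulVec_apply_le_of_mem_rowStochastic hRst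
      (fun i => inv_anti₀ hmin (inf'_le s (mem_univ i))) e) (hw e).le⟩
end

section
/- Let F be a finite nonempty type, let P be an F-by-F real matrix with nonnegative entries such that every row of P sums to 1, let α be a real number with 0 < α < 1, and let x be a real row vector indexed by F. Define z_0 = x and z_t = α·(z_{t−1} · P) + x for t ≥ 1. Then the sequence (z_t) converges, and its limit is x · (I − α·P)⁻¹. -/
open Matrix Finset

/-! By induction `z t = x ᵥ* (1 + M + ⋯ + M ^ t)` with `M = α • P`. Rows of `P` have absolute
sum `1`, so in the max-row-sum (`linfty` operator) norm `‖M‖ ≤ α < 1`, and the Neumann series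
`∑ M ^ k` converges to `(1 - M)⁻¹`. -/

namespace Matrix

variable {n R : Type*} [Fintype n] [DecidableEq n]

theorem iterate_eq_vecMul_geom_sum [Semiring R] {M : Matrix n n R} {x : n → R}
    {z : ℕ → n → R} (hz0 : z 0 = x) (hz : ∀ t, z (t + 1) = z t ᵥ* M + x) (t : ℕ) :
    z t = x ᵥ* ∑ k ∈ range (t + 1), M ^ k := by
  induction t with
  | zero => simp [hz0]
  | succ t ih =>
    have hcomm : Commute M (∑ k ∈ range (t + 1), M ^ k) :=
      Commute.sum_right _ _ _ fun k _ => Commute.self_pow M k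
    rw [hz, ih, vecMul_vecMul, geom_sum_succ (n := t + 1), hcomm.eq, vecMul_add, vecMul_one]

attribute [local instance] Matrix.linftyOpNormedRing Matrix.linftyOpNormedSpace

theorem linfty_opNorm_le_one_of_mem_rowStochastic {P : Matrix n n ℝ}
    (hP : P ∈ rowStochastic ℝ n) : ‖P‖ ≤ 1 := by
  rw [linfty_opNorm_def, ← NNReal.coe_one, NNReal.coe_le_coe]
  refine Finset.sup_le fun i _ => ?_
  rw [← NNReal.coe_le_coe]
  push_cast
  simp_rw [Real.norm_of_nonneg (nonneg_of_mem_rowStochastic hP)]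
  exact (sum_row_of_mem_rowStochastic hP i).le

theorem linfty_opNorm_smul_lt_one_of_mem_rowStochastic {P : Matrix n n ℝ}
    (hP : P ∈ rowStochastic ℝ n) {α : ℝ} (hα0 : 0 ≤ α) (hα1 : α < 1) : ‖α • P‖ < 1 := calc
  ‖α • P‖ ≤ ‖α‖ * ‖P‖ := norm_smul_le α P
  _ ≤ α * 1 := by
    rw [Real.norm_of_nonneg hα0]
    exact mul_le_mul_of_nonneg_left (linfty_opNorm_le_one_of_mem_rowStochastic hP) hα0
  _ < 1 := by linarith

theorem tendsto_iterate_vecMul_add [NormedCommRing R] [CompleteSpace R] {M : Matrix n n R}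
    (hM : ‖M‖ < 1) {x : n → R} {z : ℕ → n → R} (hz0 : z 0 = x)
    (hz : ∀ t, z (t + 1) = z t ᵥ* M + x) :
    Filter.Tendsto z Filter.atTop (nhds (x ᵥ* (1 - M)⁻¹)) := by
  have hgeom : Filter.Tendsto (fun t => ∑ k ∈ range (t + 1), M ^ k) Filter.atTop
      (nhds (1 - M)⁻¹) := by
    -- the `linfty` norm induces the product uniformity, so completeness is inherited
    have : @CompleteSpace (Matrix n n R) (PseudoMetricSpace.toUniformSpace) :=
      inferInstanceAs (CompleteSpace (n → n → R))
    rw [nonsing_inv_eq_ringInverse]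
    exact (hasSum_geom_series_inverse M hM).tendsto_sum_nat.comp (Filter.tendsto_add_atTop_nat 1)
  simp_rw [funext (iterate_eq_vecMul_geom_sum hz0 hz)]
  exact ((continuous_const.matrix_vecMul continuous_id).tendsto _).comp hgeom

end Matrix

theorem stmt_11_general {F : Type*} [Fintype F] [DecidableEq F]
    (P : Matrix F F ℝ)
    (hP : ∀ i j, 0 ≤ P i j)
    (hrow : ∀ i, ∑ j, P i j = 1)
    (α : ℝ) (hα : 0 < α) (hα1 : α < 1)
    (x : F → ℝ)
    (z : ℕ → F → ℝ)
    (hz0 : z 0 = x)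
    (hz : ∀ t : ℕ, z (t + 1) = α • (z t ᵥ* P) + x) :
    Filter.Tendsto z Filter.atTop (nhds (x ᵥ* (1 - α • P)⁻¹)) := by
  refine tendsto_iterate_vecMul_add
    (linfty_opNorm_smul_lt_one_of_mem_rowStochastic
      (mem_rowStochastic_iff_sum.mpr ⟨hP, hrow⟩) hα.le hα1) hz0 fun t => ?_
  rw [hz, vecMul_smul]

/-- For row-stochastic `P` and `0 < α < 1`, the iterates of `z ← α·z·P + x`
starting from `z = x` converge to `x · (I − α·P)⁻¹`. -/
theorem stmt_11 {F : Type*} [Fintype F] [Nonempty F] [DecidableEq F]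
    (P : Matrix F F ℝ)
    (hP : ∀ i j, 0 ≤ P i j)
    (hrow : ∀ i, ∑ j, P i j = 1)
    (α : ℝ) (hα : 0 < α) (hα1 : α < 1)
    (x : F → ℝ)
    (z : ℕ → F → ℝ)
    (hz0 : z 0 = x)
    (hz : ∀ t : ℕ, z (t + 1) = α • (z t ᵥ* P) + x) :
    Filter.Tendsto z Filter.atTop (nhds (x ᵥ* (1 - α • P)⁻¹)) :=
  stmt_11_general P hP hrow α hα hα1 x z hz0 hz
end

section
/- Let F be a finite nonempty type, let P be an F-by-F real matrix with nonnegative entries such that every row of P sums to 1, let α be a real number with 0 < α < 1, let w : F → ℝ satisfy w(i) = 1 for all i and the detailed-balance condition P[i,j] = P[j,i] for all i, j, and let s : F → ℝ satisfy s(i) ≥ √2 for all i. For an integer t ≥ 0, define R = ∑_{ℓ=0}^{∞} (1−α)·α^ℓ · P^ℓ and its truncation R_t = ∑_{ℓ=0}^{t} (1−α)·α^ℓ · P^ℓ, and set C(e) = ∑_{i ∈ F} R[i,e]/s(i) and C'_t(e) = ∑_{i ∈ F} R_t[i,e]/s(i). Then for every e ∈ F: 0 ≤ C(e) − C'_t(e)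 ≤ α^{t+1} / √2. -/
/-!
A symmetric row-stochastic `P` is column-stochastic, hence so are its powers and their countable
convex combination `R`. Splitting off the first `t + 1` terms of the series gives
`R - Rₜ = α ^ (t + 1) • (P ^ (t + 1) * R)`, again `α ^ (t + 1)` times a column-stochastic matrix,
and for a column-stochastic `M` the weighted column sum `∑ i, M i e / s i` lies between `0` and
`1 / √2` as soon as `s ≥ √2`.
-/

open Matrix Finset

namespace Matrix

variable {n : Type*} [Fintype n] [DecidableEq n]

lemma mem_colStochastic_of_mem_rowStochastic_of_isSymm {M : Matrix n n ℝ}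
    (hM : M ∈ rowStochastic ℝ n) (hsymm : M.IsSymm) : M ∈ colStochastic ℝ n := by
  rw [← hsymm.eq]
  exact transpose_mem_colStochastic_iff_mem_rowStochastic.2 hM

lemma summable_smul_of_mem_colStochastic {ι : Type*} {M : ι → Matrix n n ℝ} {c : ι → ℝ}
    (hM : ∀ ℓ, M ℓ ∈ colStochastic ℝ n) (hc : ∀ ℓ, 0 ≤ c ℓ) (hc_sum : Summable c) :
    Summable fun ℓ ↦ c ℓ • M ℓ :=
  Pi.summable.2 fun _ ↦ Pi.summable.2 fun _ ↦
    hc_sum.of_nonneg_of_le (fun ℓ ↦ mul_nonneg (hc ℓ) (nonneg_of_mem_colStochastic (hM ℓ)))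
      fun ℓ ↦ mul_le_of_le_one_right (hc ℓ) (le_one_of_mem_colStochastic (hM ℓ))

lemma mem_colStochastic_of_hasSum {ι : Type*} {M : ι → Matrix n n ℝ} {c : ι → ℝ}
    {A : Matrix n n ℝ} (hM : ∀ ℓ, M ℓ ∈ colStochastic ℝ n) (hc : ∀ ℓ, 0 ≤ c ℓ)
    (hc_one : HasSum c 1) (hA : HasSum (fun ℓ ↦ c ℓ • M ℓ) A) : A ∈ colStochastic ℝ n := by
  have hentry (i j : n) : HasSum (fun ℓ ↦ c ℓ * M ℓ i j) (A i j) :=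
    Pi.hasSum.1 (Pi.hasSum.1 hA i) j
  refine mem_colStochastic_iff_sum.2 ⟨fun i j ↦ ?_, fun j ↦ ?_⟩
  · exact (hentry i j).nonneg fun ℓ ↦ mul_nonneg (hc ℓ) (nonneg_of_mem_colStochastic (hM ℓ))
  · have hcol := hasSum_sum (s := univ) fun i _ ↦ hentry i j
    simp only [← mul_sum, sum_col_of_mem_colStochastic (hM _), mul_one] at hcol
    exact hcol.unique hc_one

lemma sum_apply_div_nonneg_of_mem_colStochastic {M : Matrix n n ℝ}
    (hM : M ∈ colStochastic ℝ n) {s : n → ℝ} (hs : ∀ i, 0 ≤ s i) (e : n) :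
    0 ≤ ∑ i, M i e / s i :=
  sum_nonneg fun i _ ↦ div_nonneg (nonneg_of_mem_colStochastic hM) (hs i)

lemma sum_apply_div_le_inv_of_mem_colStochastic {M : Matrix n n ℝ}
    (hM : M ∈ colStochastic ℝ n) {σ : ℝ} (hσ : 0 < σ) {s : n → ℝ} (hs : ∀ i, σ ≤ s i)
    (e : n) : ∑ i, M i e / s i ≤ σ⁻¹ :=
  calc ∑ i, M i e / s i
      ≤ ∑ i, M i e / σ :=
        sum_le_sum fun i _ ↦ div_le_div_of_nonneg_left (nonneg_of_mem_colStochastic hM) hσ (hs i)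
    _ = σ⁻¹ := by rw [← sum_div, sum_col_of_mem_colStochastic hM, one_div]

end Matrix

lemma HasSum.sub_sum_range_geometric_smul_pow {A : Type*} [Ring A] [Algebra ℝ A]
    [TopologicalSpace A] [IsTopologicalRing A] [ContinuousConstSMul ℝ A] [T2Space A]
    {P S : A} {a b : ℝ} (hS : HasSum (fun ℓ ↦ (b * a ^ ℓ) • P ^ ℓ) S) (k : ℕ) :
    S - ∑ ℓ ∈ range k, (b * a ^ ℓ) • P ^ ℓ = a ^ k • (P ^ k * S) := by
  have hterm (ℓ : ℕ) :
      (b * a ^ (ℓ + k)) • P ^ (ℓ + k) = a ^ k • (P ^ k * ((b * a ^ ℓ) • P ^ ℓ)) := by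
    rw [mul_smul_comm, smul_smul, ← pow_add, add_comm k]
    congr 1
    ring
  have htail := (hS.mul_left (P ^ k)).const_smul (a ^ k)
  simp only [← hterm] at htail
  exact ((hasSum_nat_add_iff' k).2 hS).unique htail

theorem stmt_14_general {F : Type*} [Fintype F] [DecidableEq F]
    (P : Matrix F F ℝ)
    (hP : ∀ i j, 0 ≤ P i j)
    (hrow : ∀ i, ∑ j, P i j = 1)
    (α : ℝ) (hα : 0 < α) (hα1 : α < 1)
    (hdb : ∀ i j, P i j = P j i)
    (s : F → ℝ) (hs : ∀ i, Real.sqrt 2 ≤ s i)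
    (t : ℕ)
    (R : Matrix F F ℝ) (hR : R = ∑' ℓ : ℕ, ((1 - α) * α ^ ℓ) • P ^ ℓ)
    (Rt : Matrix F F ℝ) (hRt : Rt = ∑ ℓ ∈ Finset.range (t + 1), ((1 - α) * α ^ ℓ) • P ^ ℓ)
    (C C' : F → ℝ)
    (hC : ∀ e, C e = ∑ i, R i e / s i)
    (hC' : ∀ e, C' e = ∑ i, Rt i e / s i) :
    ∀ e, 0 ≤ C e - C' e ∧ C e - C' e ≤ α ^ (t + 1) / Real.sqrt 2 := by
  intro e
  have hPcol : P ∈ colStochastic ℝ F :=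
    mem_colStochastic_of_mem_rowStochastic_of_isSymm (mem_rowStochastic_iff_sum.2 ⟨hP, hrow⟩)
      (IsSymm.ext fun i j ↦ hdb j i)
  have hpow (ℓ : ℕ) : P ^ ℓ ∈ colStochastic ℝ F := pow_mem hPcol ℓ
  have hc_nonneg (ℓ : ℕ) : 0 ≤ (1 - α) * α ^ ℓ :=
    mul_nonneg (sub_nonneg.2 hα1.le) (pow_nonneg hα.le ℓ)
  have hc_one : HasSum (fun ℓ : ℕ ↦ (1 - α) * α ^ ℓ) 1 := by
    simpa [mul_inv_cancel₀ (sub_ne_zero.2 hα1.ne')] using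
      (hasSum_geometric_of_lt_one hα.le hα1).mul_left (1 - α)
  have hRsum : HasSum (fun ℓ : ℕ ↦ ((1 - α) * α ^ ℓ) • P ^ ℓ) R :=
    hR ▸ (summable_smul_of_mem_colStochastic hpow hc_nonneg hc_one.summable).hasSum
  have htail_col : P ^ (t + 1) * R ∈ colStochastic ℝ F :=
    mul_mem (hpow _) (mem_colStochastic_of_hasSum hpow hc_nonneg hc_one hRsum)
  have hRt_tail : R - Rt = α ^ (t + 1) • (P ^ (t + 1) * R) :=
    hRt ▸ hRsum.sub_sum_range_geometric_smul_pow (t + 1)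
  have hdiff : C e - C' e = α ^ (t + 1) * ∑ i, (P ^ (t + 1) * R) i e / s i := by
    rw [hC, hC', ← sum_sub_distrib, mul_sum]
    refine sum_congr rfl fun i _ ↦ ?_
    rw [← sub_div, ← Matrix.sub_apply, hRt_tail, Matrix.smul_apply, smul_eq_mul, mul_div_assoc]
  have hs_pos : (0 : ℝ) < Real.sqrt 2 := by positivity
  rw [hdiff, div_eq_mul_inv]
  constructor
  · exact mul_nonneg (pow_nonneg hα.le _) (sum_apply_div_nonneg_of_mem_colStochastic htail_col
      (fun i ↦ hs_pos.le.trans (hs i)) e)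
  · exact mul_le_mul_of_nonneg_left
      (sum_apply_div_le_inv_of_mem_colStochastic htail_col hs_pos hs e) (pow_nonneg hα.le _)

/-- Unweighted-network case of the EdgeRAKE approximation guarantee: with all
edge weights equal to 1, `P` symmetric, and `s i ≥ √2`, the truncation error is between `0`
and `α^{t+1}/√2`. -/
theorem stmt_14 {F : Type*} [Fintype F] [Nonempty F] [DecidableEq F]
    (P : Matrix F F ℝ)
    (hP : ∀ i j, 0 ≤ P i j)
    (hrow : ∀ i, ∑ j, P i j = 1)
    (α : ℝ) (hα : 0 < α) (hα1 : α < 1)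
    (w : F → ℝ) (hw : ∀ i, w i = 1)
    (hdb : ∀ i j, P i j = P j i)
    (s : F → ℝ) (hs : ∀ i, Real.sqrt 2 ≤ s i)
    (t : ℕ)
    (R : Matrix F F ℝ) (hR : R = ∑' ℓ : ℕ, ((1 - α) * α ^ ℓ) • P ^ ℓ)
    (Rt : Matrix F F ℝ) (hRt : Rt = ∑ ℓ ∈ Finset.range (t + 1), ((1 - α) * α ^ ℓ) • P ^ ℓ)
    (C C' : F → ℝ)
    (hC : ∀ e, C e = ∑ i, R i e / s i)
    (hC' : ∀ e, C' e = ∑ i, Rt i e / s i) :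
    ∀ e, 0 ≤ C e - C' e ∧ C e - C' e ≤ α ^ (t + 1) / Real.sqrt 2 :=
  stmt_14_general P hP hrow α hα hα1 hdb s hs t R hR Rt hRt C C' hC hC'
end
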